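/- The function p ↦ π_p² c_p is convex on (1,2), where π_p = 2π/(p sin(π/p)) and c_p = (p-1)^{(p-1)/p}(2-p)^{(2-p)/p}; consequently there is a unique p₀ ∈ (4/3, 3/2) with π_{p₀}² c_{p₀} = π³/(π²-8), and π_p² c_p < π³/(π²-8) for all p ∈ (p₀, 2). -/

import Mathlib

open Real Set

noncomputable def pipc (p : ℝ) : ℝ := 2 * π / (p * Real.sin (π / p))

noncomputable def cp (p : ℝ) : ℝ := (p - 1) ^ ((p - 1) / p) * (2 - p) ^ ((2 - p) / p)

/-!
On `(1, 2)` the logarithm of `F p = π_p² c_p` is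
`log (4π²) - 2 log p - 2 log sin (π/p) + ((p-1)/p) log (p-1) + ((2-p)/p) log (2-p)`,
a sum of convex functions: `p ↦ π/p` is convex with values in `(π/2, π)`, where `sin` is
concave and decreasing, so `sin (π/p)` and then `log sin (π/p)` are concave; the last two
terms have second derivative `(p/(p-1) + 2p/(2-p) - 2 log (p-1) + 4 log (2-p)) / p³ ≥ 0`.
Hence `F` is log-convex, so convex.

With `Λ = π³/(π²-8)`, explicit values give `F (4/3) > Λ > F (3/2)`, so a root exists in
`(4/3, 3/2)`. As `c_p ≤ 1`, `F q ≤ π_q² → π² < Λ` when `q → 2⁻`; convexity then keeps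
`F < Λ` strictly to the right of any root, which also makes the root unique.
-/

open Filter Topology

section Convexity

variable {E : Type*} [AddCommMonoid E] [Module ℝ E] {s : Set E}

theorem ConvexOn.exp {g : E → ℝ} (hg : ConvexOn ℝ s g) : ConvexOn ℝ s fun x => exp (g x) :=
  ⟨hg.1, fun _ hx _ hy _ _ ha hb hab => (exp_le_exp.2 (hg.2 hx hy ha hb hab)).trans
    (convexOn_exp.2 (mem_univ _) (mem_univ _) ha hb hab)⟩

theorem convexOn_of_convexOn_log {f : E → ℝ} (hf : ∀ x ∈ s, 0 < f x)
    (h : ConvexOn ℝ s fun x => log (f x)) : ConvexOn ℝ s f :=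
  h.exp.congr fun x hx => exp_log (hf x hx)

theorem ConcaveOn.comp_of_mapsTo {t : Set ℝ} {f : E → ℝ} {g : ℝ → ℝ}
    (hg : ConcaveOn ℝ t g) (hf : ConcaveOn ℝ s f) (hg' : MonotoneOn g t) (hst : MapsTo f s t) :
    ConcaveOn ℝ s (g ∘ f) :=
  ⟨hf.1, fun _ hx _ hy _ _ ha hb hab => (hg.2 (hst hx) (hst hy) ha hb hab).trans <|
    hg' (hg.1 (hst hx) (hst hy) ha hb hab) (hst (hf.1 hx hy ha hb hab)) (hf.2 hx hy ha hb hab)⟩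

theorem ConcaveOn.comp_convexOn_of_mapsTo {t : Set ℝ} {f : E → ℝ} {g : ℝ → ℝ}
    (hg : ConcaveOn ℝ t g) (hf : ConvexOn ℝ s f) (hg' : AntitoneOn g t) (hst : MapsTo f s t) :
    ConcaveOn ℝ s (g ∘ f) :=
  ⟨hf.1, fun _ hx _ hy _ _ ha hb hab => (hg.2 (hst hx) (hst hy) ha hb hab).trans <|
    hg' (hst (hf.1 hx hy ha hb hab)) (hg.1 (hst hx) (hst hy) ha hb hab) (hf.2 hx hy ha hb hab)⟩

end Convexity

theorem convexOn_of_hasDerivAt2_nonneg {D : Set ℝ} (hD : Convex ℝ D) (hDo : IsOpen D)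
    {f f' f'' : ℝ → ℝ} (hf' : ∀ x ∈ D, HasDerivAt f (f' x) x)
    (hf'' : ∀ x ∈ D, HasDerivAt f' (f'' x) x) (hf''₀ : ∀ x ∈ D, 0 ≤ f'' x) :
    ConvexOn ℝ D f := by
  refine convexOn_of_hasDerivWithinAt2_nonneg (f' := f') (f'' := f'') hD
    (fun x hx => (hf' x hx).continuousAt.continuousWithinAt) ?_ ?_ ?_ <;> rw [hDo.interior_eq]
  · exact fun x hx => (hf' x hx).hasDerivWithinAt
  · exact fun x hx => (hf'' x hx).hasDerivWithinAt
  · exact hf''₀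

theorem ConvexOn.lt_of_mem_Ioo {s : Set ℝ} {f : ℝ → ℝ} (hf : ConvexOn ℝ s f)
    {a b c C : ℝ} (ha : a ∈ s) (hc : c ∈ s) (hb : b ∈ Ioo a c) (hfa : f a ≤ C)
    (hfc : f c < C) : f b < C := by
  by_contra! h
  have hb_seg : b ∈ openSegment ℝ a c := by rwa [openSegment_eq_Ioo (hb.1.trans hb.2)]
  exact (hf.lt_left_of_right_lt ha hc hb_seg (hfc.trans_le h)).not_ge (hfa.trans h)

theorem antitoneOn_sin_Icc : AntitoneOn sin (Icc (π / 2) π) := fun x hx y hy hxy => by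
  rw [← sin_pi_sub x, ← sin_pi_sub y]
  exact sin_le_sin_of_le_of_le_pi_div_two (by linarith [hy.2, pi_pos]) (by linarith [hx.1])
    (by linarith)

theorem convexOn_const_div_Ioi {c : ℝ} (hc : 0 ≤ c) : ConvexOn ℝ (Ioi 0) fun x => c / x :=
  ((convexOn_zpow (-1)).smul hc).congr fun x _ => by simp [div_eq_mul_inv]

theorem pi_div_mem_Ioo {p : ℝ} (hp : p ∈ Ioo (1 : ℝ) 2) : π / p ∈ Ioo (π / 2) π := by
  obtain ⟨h1, h2⟩ := hp
  constructor
  · exact div_lt_div_of_pos_left pi_pos (by linarith) h2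
  · rw [div_lt_iff₀ (by linarith)]; nlinarith [pi_pos]

theorem sin_pi_div_pos {p : ℝ} (hp : p ∈ Ioo (1 : ℝ) 2) : 0 < sin (π / p) :=
  sin_pos_of_pos_of_lt_pi (by linarith [(pi_div_mem_Ioo hp).1, pi_pos]) (pi_div_mem_Ioo hp).2

theorem concaveOn_log_sin_pi_div : ConcaveOn ℝ (Ioo 1 2) fun p => log (sin (π / p)) := by
  have hsin : ConcaveOn ℝ (Ioo 1 2) fun p => sin (π / p) :=
    (strictConcaveOn_sin_Icc.concaveOn.subset (Icc_subset_Icc (by positivity) le_rfl)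
      (convex_Icc _ _)).comp_convexOn_of_mapsTo
      ((convexOn_const_div_Ioi pi_pos.le).subset (fun p hp => one_pos.trans hp.1)
        (convex_Ioo 1 2))
      antitoneOn_sin_Icc fun p hp => Ioo_subset_Icc_self (pi_div_mem_Ioo hp)
  exact strictConcaveOn_log_Ioi.concaveOn.comp_of_mapsTo hsin strictMonoOn_log.monotoneOn
    fun p hp => sin_pi_div_pos hp

theorem hasDerivAt_log_cp {p : ℝ} (hp : p ∈ Ioo (1 : ℝ) 2) :
    HasDerivAt (fun p => (p - 1) / p * log (p - 1) + (2 - p) / p * log (2 - p))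
      ((log (p - 1) - 2 * log (2 - p)) / p ^ 2) p := by
  obtain ⟨h1, h2⟩ := hp
  have d1 := ((hasDerivAt_id' p).sub_const 1).div (hasDerivAt_id' p) (by positivity)
  have d2 := ((hasDerivAt_id' p).const_sub 2).div (hasDerivAt_id' p) (by positivity)
  have l1 := ((hasDerivAt_id' p).sub_const 1).log (by linarith)
  have l2 := ((hasDerivAt_id' p).const_sub 2).log (by linarith)
  refine ((d1.mul l1).add (d2.mul l2)).congr_deriv ?_
  simp only [Pi.div_apply]
  field_simp
  ring

theorem hasDerivAt_deriv_log_cp {p : ℝ} (hp : p ∈ Ioo (1 : ℝ) 2) :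
    HasDerivAt (fun p => (log (p - 1) - 2 * log (2 - p)) / p ^ 2)
      ((p / (p - 1) + 2 * p / (2 - p) - 2 * log (p - 1) + 4 * log (2 - p)) / p ^ 3) p := by
  obtain ⟨h1, h2⟩ := hp
  have l1 := ((hasDerivAt_id' p).sub_const 1).log (by linarith)
  have l2 := ((hasDerivAt_id' p).const_sub 2).log (by linarith)
  refine ((l1.sub (l2.const_mul 2)).div (hasDerivAt_pow 2 p) (by positivity)).congr_deriv ?_
  simp only [Pi.sub_apply]
  field_simp
  ring

theorem pipc_pos {p : ℝ} (hp : p ∈ Ioo (1 : ℝ) 2) : 0 < pipc p :=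
  div_pos (by positivity) (mul_pos (by linarith [hp.1]) (sin_pi_div_pos hp))

theorem cp_pos {p : ℝ} (hp : p ∈ Ioo (1 : ℝ) 2) : 0 < cp p :=
  mul_pos (rpow_pos_of_pos (by linarith [hp.1]) _) (rpow_pos_of_pos (by linarith [hp.2]) _)

theorem log_pipc {p : ℝ} (hp : p ∈ Ioo (1 : ℝ) 2) :
    log (pipc p) = log (2 * π) - log p - log (sin (π / p)) := by
  rw [pipc, log_div (by positivity) (mul_pos (by linarith [hp.1]) (sin_pi_div_pos hp)).ne',
    log_mul (by linarith [hp.1]) (sin_pi_div_pos hp).ne', sub_sub]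

theorem log_cp {p : ℝ} (hp : p ∈ Ioo (1 : ℝ) 2) :
    log (cp p) = (p - 1) / p * log (p - 1) + (2 - p) / p * log (2 - p) := by
  obtain ⟨h1, h2⟩ := hp
  rw [cp, log_mul (by positivity) (by positivity), log_rpow (by linarith),
    log_rpow (by linarith)]

theorem convexOn_log_pipc : ConvexOn ℝ (Ioo 1 2) fun p => log (pipc p) := by
  have hlog : ConvexOn ℝ (Ioo 1 2) (-log) :=
    (strictConcaveOn_log_Ioi.concaveOn.subset (fun p hp => one_pos.trans hp.1)
      (convex_Ioo 1 2)).neg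
  refine (((convexOn_const (log (2 * π)) (convex_Ioo 1 2)).add hlog).add
    concaveOn_log_sin_pi_div.neg).congr fun p hp => ?_
  simp only [Pi.add_apply, Pi.neg_apply, log_pipc hp]
  ring

theorem convexOn_log_cp : ConvexOn ℝ (Ioo 1 2) fun p => log (cp p) := by
  refine (convexOn_of_hasDerivAt2_nonneg (convex_Ioo 1 2) isOpen_Ioo
    (fun _ => hasDerivAt_log_cp) (fun _ => hasDerivAt_deriv_log_cp)
    fun p hp => ?_).congr fun p hp => (log_cp hp).symm
  obtain ⟨h1, h2⟩ := hp
  have hlog1 : log (p - 1) ≤ 0 := log_nonpos (by linarith) (by linarith)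
  -- `log x ≥ 1 - 1/x` turns `4 log (2 - p) + 2p/(2 - p)` into something `≥ 2`
  have hlog2 : 1 - (2 - p)⁻¹ ≤ log (2 - p) := one_sub_inv_le_log_of_pos (by linarith)
  have hfrac : 4 * (1 - (2 - p)⁻¹) + 2 * p / (2 - p) = 2 := by
    field_simp
    ring
  have hpos : 0 < p / (p - 1) := div_pos (by linarith) (by linarith)
  exact div_nonneg (by linarith) (by positivity)

theorem convexOn_pipc_sq_mul_cp : ConvexOn ℝ (Ioo 1 2) fun p => pipc p ^ 2 * cp p := by
  refine convexOn_of_convexOn_log (fun p hp => mul_pos (pow_pos (pipc_pos hp) 2) (cp_pos hp))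
    (((convexOn_log_pipc.smul zero_le_two).add convexOn_log_cp).congr fun p hp => ?_)
  simp only [Pi.add_apply, log_mul (pow_pos (pipc_pos hp) 2).ne' (cp_pos hp).ne', log_pow,
    smul_eq_mul, Nat.cast_ofNat]

theorem pipc_four_thirds_sq : pipc (4 / 3) ^ 2 = 9 * π ^ 2 / 2 := by
  have hsin : sin (π / (4 / 3)) = √2 / 2 := by
    rw [show π / (4 / 3) = π - π / 4 by ring, sin_pi_sub, sin_pi_div_four]
  rw [pipc, hsin, div_pow, mul_pow, mul_pow, div_pow √2, sq_sqrt zero_le_two]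
  ring

theorem pipc_three_halves_sq : pipc (3 / 2) ^ 2 = 64 * π ^ 2 / 27 := by
  have hsin : sin (π / (3 / 2)) = √3 / 2 := by
    rw [show π / (3 / 2) = π - π / 3 by ring, sin_pi_sub, sin_pi_div_three]
  rw [pipc, hsin, div_pow, mul_pow, mul_pow, div_pow √3, sq_sqrt zero_le_three]
  ring

theorem cp_four_thirds :
    cp (4 / 3) = (3⁻¹ : ℝ) ^ (4⁻¹ : ℝ) * (2 / 3 : ℝ) ^ (2⁻¹ : ℝ) := by
  norm_num [cp]

theorem cp_three_halves :
    cp (3 / 2) = (2⁻¹ : ℝ) ^ (3⁻¹ : ℝ) * (2⁻¹ : ℝ) ^ (3⁻¹ : ℝ) := by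
  norm_num [cp]

theorem pi_sq_sub_eight_pos : 0 < π ^ 2 - 8 := by nlinarith [pi_gt_d2]

theorem lt_pipc_sq_mul_cp_four_thirds : π ^ 3 / (π ^ 2 - 8) < pipc (4 / 3) ^ 2 * cp (4 / 3) := by
  have hcp : 3 / 5 ≤ cp (4 / 3) := by
    have h1 : (3 / 4 : ℝ) ≤ (3⁻¹ : ℝ) ^ (4⁻¹ : ℝ) := by
      rw [le_rpow_inv_iff_of_pos (by norm_num) (by norm_num) (by norm_num)]; norm_num
    have h2 : (4 / 5 : ℝ) ≤ (2 / 3 : ℝ) ^ (2⁻¹ : ℝ) := by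
      rw [le_rpow_inv_iff_of_pos (by norm_num) (by norm_num) (by norm_num)]; norm_num
    rw [cp_four_thirds]
    nlinarith
  have hπ : 0 < 27 / 10 * (π ^ 2 - 8) - π := by nlinarith [pi_gt_d2]
  rw [pipc_four_thirds_sq, div_lt_iff₀ pi_sq_sub_eight_pos]
  nlinarith [mul_pos (pow_pos pi_pos 2) hπ,
    mul_le_mul_of_nonneg_left hcp (mul_nonneg (by positivity) pi_sq_sub_eight_pos.le :
      0 ≤ 9 * π ^ 2 / 2 * (π ^ 2 - 8))]

theorem pipc_sq_mul_cp_three_halves_lt : pipc (3 / 2) ^ 2 * cp (3 / 2) < π ^ 3 / (π ^ 2 - 8) := by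
  have hcp : cp (3 / 2) ≤ 16 / 25 := by
    have h : (2⁻¹ : ℝ) ^ (3⁻¹ : ℝ) ≤ 4 / 5 := by
      rw [rpow_inv_le_iff_of_pos (by norm_num) (by norm_num) (by norm_num)]; norm_num
    rw [cp_three_halves]
    nlinarith [rpow_nonneg (show (0 : ℝ) ≤ 2⁻¹ by norm_num) 3⁻¹]
  have hπ : 1024 / 675 * (π ^ 2 - 8) < π := by
    nlinarith [mul_pos (sub_pos.2 pi_gt_d2) (sub_pos.2 pi_lt_d2)]
  rw [pipc_three_halves_sq, lt_div_iff₀ pi_sq_sub_eight_pos]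
  nlinarith [mul_lt_mul_of_pos_left hπ (pow_pos pi_pos 2),
    mul_le_mul_of_nonneg_left hcp (mul_nonneg (by positivity) pi_sq_sub_eight_pos.le :
      0 ≤ 64 * π ^ 2 / 27 * (π ^ 2 - 8))]

theorem cp_le_one {p : ℝ} (hp : p ∈ Ioo (1 : ℝ) 2) : cp p ≤ 1 := by
  obtain ⟨h1, h2⟩ := hp
  exact mul_le_one₀ (rpow_le_one (by linarith) (by linarith) (by positivity))
    (rpow_nonneg (by linarith) _) (rpow_le_one (by linarith) (by linarith) (by positivity))

theorem tendsto_pipc_sq_nhdsLT_two : Tendsto (fun p => pipc p ^ 2) (𝓝[<] 2) (𝓝 (π ^ 2)) := by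
  have hcont : ContinuousAt pipc 2 :=
    continuousAt_const.div (continuousAt_id.mul
      (continuous_sin.continuousAt.comp (continuousAt_const.div continuousAt_id two_ne_zero)))
      (by simp)
  have hval : pipc 2 = π := by simp [pipc]
  rw [← hval]
  exact (hcont.tendsto.mono_left nhdsWithin_le_nhds).pow 2

theorem exists_mem_Ioo_pipc_sq_mul_cp_lt {p : ℝ} (hp : p < 2) :
    ∃ q ∈ Ioo p 2, pipc q ^ 2 * cp q < π ^ 3 / (π ^ 2 - 8) := by
  have hlt : π ^ 2 < π ^ 3 / (π ^ 2 - 8) := by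
    have h : π ^ 2 - 8 < π := by nlinarith [pi_gt_d2, pi_lt_d2]
    rw [lt_div_iff₀ pi_sq_sub_eight_pos]
    nlinarith [mul_lt_mul_of_pos_left h (pow_pos pi_pos 2)]
  obtain ⟨q, hq, hqmem⟩ := ((tendsto_pipc_sq_nhdsLT_two.eventually_lt_const hlt).and
    (Ioo_mem_nhdsLT (max_lt (by norm_num : (1 : ℝ) < 2) hp))).exists
  refine ⟨q, ⟨(le_max_right _ _).trans_lt hqmem.1, hqmem.2⟩, ?_⟩
  have hq1 : q ∈ Ioo (1 : ℝ) 2 := ⟨(le_max_left _ _).trans_lt hqmem.1, hqmem.2⟩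
  calc pipc q ^ 2 * cp q ≤ pipc q ^ 2 := mul_le_of_le_one_right (sq_nonneg _) (cp_le_one hq1)
    _ < _ := hq

theorem pipc_sq_mul_cp_lt_of_root_lt {p₀ p : ℝ} (hp₀ : p₀ ∈ Ioo (1 : ℝ) 2)
    (hroot : pipc p₀ ^ 2 * cp p₀ = π ^ 3 / (π ^ 2 - 8)) (hp : p ∈ Ioo p₀ 2) :
    pipc p ^ 2 * cp p < π ^ 3 / (π ^ 2 - 8) := by
  obtain ⟨q, hq, hFq⟩ := exists_mem_Ioo_pipc_sq_mul_cp_lt hp.2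
  exact convexOn_pipc_sq_mul_cp.lt_of_mem_Ioo hp₀ ⟨hp₀.1.trans (hp.1.trans hq.1), hq.2⟩
    ⟨hp.1, hq.1⟩ hroot.le hFq

theorem exists_mem_Ioo_pipc_sq_mul_cp_eq :
    ∃ p₀ ∈ Ioo (4 / 3 : ℝ) (3 / 2), pipc p₀ ^ 2 * cp p₀ = π ^ 3 / (π ^ 2 - 8) := by
  have hcont : ContinuousOn (fun p => pipc p ^ 2 * cp p) (Icc (4 / 3) (3 / 2)) :=
    (convexOn_pipc_sq_mul_cp.continuousOn isOpen_Ioo).mono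
      (Icc_subset_Ioo (by norm_num) (by norm_num))
  obtain ⟨p₀, hp₀, hroot⟩ := intermediate_value_Icc' (by norm_num) hcont
    ⟨pipc_sq_mul_cp_three_halves_lt.le, lt_pipc_sq_mul_cp_four_thirds.le⟩
  refine ⟨p₀, ⟨hp₀.1.lt_of_ne ?_, hp₀.2.lt_of_ne ?_⟩, hroot⟩
  · rintro rfl
    exact lt_pipc_sq_mul_cp_four_thirds.ne' hroot
  · rintro rfl
    exact pipc_sq_mul_cp_three_halves_lt.ne hroot

theorem convexity_and_threshold :
    ConvexOn ℝ (Ioo (1:ℝ) 2) (fun p => pipc p ^ 2 * cp p) ∧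
    (∃! p₀, p₀ ∈ Ioo (4/3 : ℝ) (3/2) ∧ pipc p₀ ^ 2 * cp p₀ = π^3 / (π^2 - 8)) ∧
    (∀ p₀ ∈ Ioo (4/3 : ℝ) (3/2), pipc p₀ ^ 2 * cp p₀ = π^3 / (π^2 - 8) →
      ∀ p ∈ Ioo p₀ 2, pipc p ^ 2 * cp p < π^3 / (π^2 - 8)) := by
  have hsub : Ioo (4 / 3 : ℝ) (3 / 2) ⊆ Ioo 1 2 := Ioo_subset_Ioo (by norm_num) (by norm_num)
  refine ⟨convexOn_pipc_sq_mul_cp, ?_, fun p₀ hp₀ hroot p hp =>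
    pipc_sq_mul_cp_lt_of_root_lt (hsub hp₀) hroot hp⟩
  obtain ⟨p₀, hp₀, hroot⟩ := exists_mem_Ioo_pipc_sq_mul_cp_eq
  refine ⟨p₀, ⟨hp₀, hroot⟩, fun p ⟨hp, hroot'⟩ => ?_⟩
  rcases lt_trichotomy p p₀ with hlt | heq | hgt
  · exact absurd hroot (pipc_sq_mul_cp_lt_of_root_lt (hsub hp) hroot' ⟨hlt, (hsub hp₀).2⟩).ne
  · exact heq
  · exact absurd hroot' (pipc_sq_mul_cp_lt_of_root_lt (hsub hp₀) hroot ⟨hgt, (hsub hp).2⟩).ne
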